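/- Let A be a real Banach algebra (a complete normed ring that is a normed ℝ-algebra) with unit. Let K : ℝ → A be continuous; let U : ℝ → A be differentiable with U(0) = 1, U′(t) = K(t)·U(t), and U(t) invertible for every t; and let H : ℝ → A be differentiable with H′(t) = K(t)·H(t) − H(t)·K(t) for all t. Fix any f ∈ A and any real number ε, and set Q_t(f) = U(t)·f·U(t)⁻¹. Then for all t ∈ ℝ: H(t)·Q_t(f) − ε·(Q_t(f)·H(t)) = Q_t( H(0)·f − ε·(f·H(0)) ). In particular (taking ε = ±1 according to the parity of f), the conjugation isomorphisms Q_t intertwine the differentials: D^{H_t}(Q_t(f)) = Q_t(D^{H_0}(f)). -/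

import Mathlib

/-!
Let `V t = (U t)⁻¹`. Since `V' = -V K`, the Lax equation makes `V H U` stationary:
`(V H U)' = -V K H U + V (K H - H K) U + V H K U = 0`, so `H t = U t * H 0 * V t`.
Conjugation by the unit `U t` is a ring automorphism commuting with real scalars, hence it
carries the differential `f ↦ H 0 * f - ε • (f * H 0)` to `f ↦ H t * f - ε • (f * H t)`.
-/

open Ring

section Conjugation

variable {R A : Type*} [Ring A] [SMul R A] [SMulCommClass R A A] [IsScalarTower R A A]

/-- `ε` plays the role of the sign `(-1)^{deg f}` in the paper's `D^H f = H f - (-1)^{deg f} f H`. -/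
def hamiltonianDifferential (ε : R) (H f : A) : A :=
  H * f - ε • (f * H)

theorem hamiltonianDifferential_conj (u : Aˣ) (ε : R) (H f : A) :
    hamiltonianDifferential ε (u * H * u⁻¹) (u * f * u⁻¹)
      = u * hamiltonianDifferential ε H f * u⁻¹ := by
  have conj_mul (a b : A) : u * a * ↑u⁻¹ * (u * b * ↑u⁻¹) = u * (a * b) * ↑u⁻¹ := by
    simp only [mul_assoc, Units.inv_mul_cancel_left]
  simp only [hamiltonianDifferential, conj_mul, mul_sub, sub_mul, mul_smul_comm, smul_mul_assoc]

end Conjugation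

section LaxEquation

variable {𝕜 A : Type*} [NormedRing A] [HasSummableGeomSeries A]

theorem HasDerivAt.ringInverse [NontriviallyNormedField 𝕜] [NormedAlgebra 𝕜 A]
    {U : 𝕜 → A} {U' : A} {t : 𝕜} (hU : HasDerivAt U U' t) (ht : IsUnit (U t)) :
    HasDerivAt (fun s => (U s)⁻¹ʳ) (-((U t)⁻¹ʳ * U' * (U t)⁻¹ʳ)) t := by
  obtain ⟨u, hu⟩ := ht
  have hinv : HasFDerivAt Ring.inverse _ (U t) := hu ▸ hasFDerivAt_ringInverse (𝕜 := 𝕜) u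
  rw [← hu, inverse_unit]
  exact hinv.comp_hasDerivAt t hU

theorem hasDerivAt_inverse_mul_mul_of_lax [NontriviallyNormedField 𝕜] [NormedAlgebra 𝕜 A]
    {K U H : 𝕜 → A} {t : 𝕜} (hU : HasDerivAt U (K t * U t) t) (ht : IsUnit (U t))
    (hH : HasDerivAt H (K t * H t - H t * K t) t) :
    HasDerivAt (fun s => (U s)⁻¹ʳ * H s * U s) 0 t := by
  have hVK : (U t)⁻¹ʳ * (K t * U t) * (U t)⁻¹ʳ = (U t)⁻¹ʳ * K t := by
    rw [mul_assoc, mul_inverse_cancel_right _ _ ht]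
  convert ((hU.ringInverse ht).fun_mul hH).fun_mul hU using 1
  rw [hVK]
  noncomm_ring

theorem eq_conj_of_lax [RCLike 𝕜] [NormedAlgebra 𝕜 A] {K U H : 𝕜 → A} (hU0 : U 0 = 1)
    (hU : ∀ t, HasDerivAt U (K t * U t) t) (hUunit : ∀ t, IsUnit (U t))
    (hH : ∀ t, HasDerivAt H (K t * H t - H t * K t) t) (t : 𝕜) :
    H t = U t * H 0 * (U t)⁻¹ʳ := by
  have hconj s := hasDerivAt_inverse_mul_mul_of_lax (hU s) (hUunit s) (hH s)
  have hconst : (U t)⁻¹ʳ * H t * U t = H 0 := by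
    simpa [hU0] using is_const_of_deriv_eq_zero (fun s => (hconj s).differentiableAt)
      (fun s => (hconj s).deriv) t 0
  rw [← hconst]
  simp only [mul_assoc, mul_inverse_cancel_left _ _ (hUunit t), mul_inverse_cancel _ (hUunit t),
    mul_one]

end LaxEquation

theorem conjugation_intertwines_differentials_general
    {A : Type*} [NormedRing A] [NormedAlgebra ℝ A] [CompleteSpace A]
    (K U H : ℝ → A)
    (hU0 : U 0 = 1)
    (hU : ∀ t : ℝ, HasDerivAt U (K t * U t) t)
    (hUunit : ∀ t : ℝ, IsUnit (U t))
    (hH : ∀ t : ℝ, HasDerivAt H (K t * H t - H t * K t) t)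
    (f : A) (ε : ℝ) :
    ∀ t : ℝ,
      H t * (U t * f * Ring.inverse (U t))
          - ε • ((U t * f * Ring.inverse (U t)) * H t)
        = U t * (H 0 * f - ε • (f * H 0)) * Ring.inverse (U t) := by
  intro t
  obtain ⟨u, hu⟩ := hUunit t
  have hHt := eq_conj_of_lax hU0 hU hUunit hH t
  rw [← hu, inverse_unit] at hHt ⊢
  rw [hHt]
  exact hamiltonianDifferential_conj u ε (H 0) f

/-- Invariance of the Hamiltonian differential under conjugation.  In a real Banach
algebra with unit, let `K : ℝ → A` be continuous; let `U : ℝ → A` be differentiable with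
`U 0 = 1`, `U' t = K t * U t`, and `U t` a unit for all `t`; and let `H : ℝ → A` be
differentiable satisfying the Lax equation `H' t = K t * H t - H t * K t`.  For any
`f ∈ A` and any real sign `ε`, setting `Q_t f = U t * f * (U t)⁻¹`, one has
`H t * Q_t f - ε • (Q_t f * H t) = Q_t (H 0 * f - ε • (f * H 0))` for all `t`; i.e. the
conjugation isomorphisms `Q_t` intertwine the differentials: `D^{H_t}(Q_t f) = Q_t (D^{H_0} f)`. -/
theorem conjugation_intertwines_differentials
    {A : Type*} [NormedRing A] [NormedAlgebra ℝ A] [CompleteSpace A]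
    (K U H : ℝ → A) (hK : Continuous K)
    (hU0 : U 0 = 1)
    (hU : ∀ t : ℝ, HasDerivAt U (K t * U t) t)
    (hUunit : ∀ t : ℝ, IsUnit (U t))
    (hH : ∀ t : ℝ, HasDerivAt H (K t * H t - H t * K t) t)
    (f : A) (ε : ℝ) :
    ∀ t : ℝ,
      H t * (U t * f * Ring.inverse (U t))
          - ε • ((U t * f * Ring.inverse (U t)) * H t)
        = U t * (H 0 * f - ε • (f * H 0)) * Ring.inverse (U t) :=
  conjugation_intertwines_differentials_general K U H hU0 hU hUunit hH f ε
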